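/- arXiv:2508.10437 — 2 statements merged into one kernel-verified Lean document; each statement's English description precedes it below -/
import Mathlib

section
/- Let f : ℝ → ℝ be convex and L-Lipschitz, and let φ < L. Then sup_{z∈ℝ} [ f(z) − φ·|z − ẑ| ] = +∞ for any ẑ, i.e., the penalized supremum is unbounded when the penalty coefficient is below the Lipschitz constant. -/
private lemma auxA (f : ℝ → ℝ) (φ zhat M : ℝ) (hconv : ConvexOn ℝ Set.univ f)
    (hM : ∀ w : ℝ, f w - φ * |w - zhat| ≤ M) {z z' : ℝ} (hlt : z < z') :
    f z' - f z ≤ φ * (z' - z) := by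
  by_contra hcon
  push_neg at hcon
  set s := (f z' - f z) / (z' - z) with hs
  have hzz : (0:ℝ) < z' - z := sub_pos.2 hlt
  have hsφ : φ < s := by rw [hs, lt_div_iff₀ hzz]; linarith
  set w := max (max (z' + 1) zhat) ((M - f z' + s * z' - φ * zhat) / (s - φ) + 1) with hw
  have hwz' : z' < w :=
    lt_of_lt_of_le (by linarith) (le_trans (le_max_left _ _) (le_max_left _ _))
  have hwzhat : zhat ≤ w := le_trans (le_max_right _ _) (le_max_left _ _)
  have hsφ' : (0:ℝ) < s - φ := by linarith
  have hwbig : (M - f z' + s * z' - φ * zhat) / (s - φ) < w :=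
    lt_of_lt_of_le (by linarith) (le_max_right _ _)
  have hwbig' : M - f z' + s * z' - φ * zhat < (s - φ) * w := by
    rw [div_lt_iff₀ hsφ'] at hwbig; linarith
  have hslope : (f z' - f z) / (z' - z) ≤ (f w - f z') / (w - z') :=
    hconv.slope_mono_adjacent (Set.mem_univ z) (Set.mem_univ w) hlt hwz'
  have hwz'' : (0:ℝ) < w - z' := by linarith
  have hgrow : s * (w - z') ≤ f w - f z' := (le_div_iff₀ hwz'').1 hslope
  have habs : |w - zhat| = w - zhat := abs_of_nonneg (by linarith)
  have hMw := hM w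
  rw [habs] at hMw
  nlinarith [hgrow, hMw, hwbig']

/-- If `f` is convex with Lipschitz constant exactly `L` (i.e. `L` is the least
upper bound of the difference quotients) and `0 ≤ φ < L`, then the penalized
supremum `sup_{z ∈ ℝ} [f z - φ·|z - ẑ|]` is unbounded (equals `+∞`). -/
theorem penalized_sup_unbounded_of_small_penalty (f : ℝ → ℝ) (L φ zhat : ℝ)
    (hconv : ConvexOn ℝ Set.univ f)
    (hexact : IsLUB {r : ℝ | ∃ z z' : ℝ, z ≠ z' ∧ r = |f z - f z'| / |z - z'|} L)
    (hφ0 : 0 ≤ φ) (hφL : φ < L) :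
    ¬ BddAbove (Set.range fun z : ℝ => f z - φ * |z - zhat|) := by
  intro hbdd
  obtain ⟨M, hM⟩ := hbdd
  have hM' : ∀ w : ℝ, f w - φ * |w - zhat| ≤ M := fun w => hM ⟨w, rfl⟩
  -- reflected function
  have hg : ConvexOn ℝ Set.univ (fun x => f (-x)) := by
    refine ⟨convex_univ, ?_⟩
    intro x _ y _ a b ha hb hab
    have h := hconv.2 (Set.mem_univ (-x)) (Set.mem_univ (-y)) ha hb hab
    simp only [smul_eq_mul] at h ⊢
    have harg : a * -x + b * -y = -(a * x + b * y) := by ring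
    rw [harg] at h
    exact h
  have hMg : ∀ w : ℝ, (fun x => f (-x)) w - φ * |w - (-zhat)| ≤ M := by
    intro w
    have : |w - (-zhat)| = |(-w) - zhat| := by rw [← abs_neg]; ring_nf
    rw [this]
    exact hM' (-w)
  have key : ∀ z z' : ℝ, z < z' → |f z' - f z| ≤ φ * (z' - z) := by
    intro z z' hlt
    rw [abs_le]
    constructor
    · have h2 : f z - f z' ≤ φ * (z' - z) := by
        have h := auxA (fun x => f (-x)) φ (-zhat) M hg hMg (neg_lt_neg hlt)
        simp only [neg_neg] at h
        nlinarith [h]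
      linarith
    · exact auxA f φ zhat M hconv hM' hlt
  have hub : φ ∈ upperBounds {r : ℝ | ∃ z z' : ℝ, z ≠ z' ∧ r = |f z - f z'| / |z - z'|} := by
    rintro r ⟨z, z', hne, rfl⟩
    have hzz : (0:ℝ) < |z - z'| := abs_pos.2 (sub_ne_zero.2 hne)
    rw [div_le_iff₀ hzz]
    rcases lt_or_gt_of_ne hne with h | h
    · have := key z z' h
      have habs : |z - z'| = z' - z := by rw [abs_sub_comm]; exact abs_of_pos (by linarith)
      rw [habs]
      calc |f z - f z'| = |f z' - f z| := abs_sub_comm _ _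
        _ ≤ φ * (z' - z) := this
    · have := key z' z h
      have habs : |z - z'| = z - z' := abs_of_pos (by linarith)
      rw [habs]
      exact this
  have : L ≤ φ := hexact.2 hub
  linarith
end

section
/- Let D ⊆ ℝ be a nonempty compact set and define φ* = sup{|γ| : γ ∈ D}. Then for every empirical point ẑ ∈ ℝ, sup_{z∈ℝ} max_{γ∈D} [ −γ·z − φ*·|z − ẑ| ] = max_{γ∈D} (−γ·ẑ). -/
/-- For a nonempty compact dual feasible set `D ⊆ ℝ` and `φ* = sup{|γ| : γ ∈ D}`,
the penalized supremum collapses to evaluation at the sample point: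
`sup_{z ∈ ℝ} max_{γ ∈ D} [-γ·z - φ*·|z - ẑ|] = max_{γ ∈ D} (-γ·ẑ)`. -/
theorem dual_penalized_sup_collapse (D : Set ℝ) (hD : D.Nonempty)
    (hDc : IsCompact D) (zhat : ℝ) :
    (⨆ z : ℝ, ⨆ γ ∈ D, (-(γ * z) - sSup (abs '' D) * |z - zhat|)) =
      ⨆ γ ∈ D, -(γ * zhat) := by
  have hMb : BddAbove (abs '' D) := (hDc.image continuous_abs).bddAbove
  set M := sSup (abs '' D) with hMdef
  have habs : ∀ γ ∈ D, |γ| ≤ M := fun γ hγ => le_csSup hMb ⟨γ, hγ, rfl⟩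
  obtain ⟨γ0, hγ0⟩ := hD
  have hM0 : 0 ≤ M := (abs_nonneg γ0).trans (habs γ0 hγ0)
  set t : ℝ → ℝ := fun γ => ⨆ _ : γ ∈ D, -(γ * zhat) with ht
  set s : ℝ → ℝ → ℝ := fun z γ => ⨆ _ : γ ∈ D, (-(γ * z) - M * |z - zhat|) with hs
  have hB : ∀ γ, t γ ≤ M * |zhat| := by
    intro γ
    apply Real.iSup_le
    · intro hγ
      calc -(γ * zhat) ≤ |γ * zhat| := neg_le_abs _
        _ = |γ| * |zhat| := abs_mul _ _
        _ ≤ M * |zhat| := mul_le_mul_of_nonneg_right (habs γ hγ) (abs_nonneg _)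
    · positivity
  have hbt : BddAbove (Set.range t) := ⟨M * |zhat|, by rintro x ⟨γ, rfl⟩; exact hB γ⟩
  have hst : ∀ z γ, s z γ ≤ t γ := by
    intro z γ
    apply ciSup_mono ((Set.finite_range _).bddAbove)
    intro hγ
    have h1 : -(γ * (z - zhat)) ≤ |γ| * |z - zhat| := by
      calc -(γ * (z - zhat)) ≤ |γ * (z - zhat)| := neg_le_abs _
        _ = |γ| * |z - zhat| := abs_mul _ _
    have h2 : |γ| * |z - zhat| ≤ M * |z - zhat| :=
      mul_le_mul_of_nonneg_right (habs γ hγ) (abs_nonneg _)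
    nlinarith [h1, h2]
  have hFz : ∀ z, (⨆ γ, s z γ) ≤ ⨆ γ, t γ := fun z => ciSup_mono hbt (hst z)
  apply le_antisymm
  · exact ciSup_le hFz
  · have heq : (⨆ γ, t γ) = ⨆ γ, s zhat γ := by
      simp [ht, hs, sub_self, abs_zero, mul_zero, sub_zero]
    rw [heq]
    exact le_ciSup ⟨⨆ γ, t γ, by rintro x ⟨z, rfl⟩; exact hFz z⟩ zhat
end
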